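/- For every ε > 0, all μ₁, μ₂, μ₃ ≥ 0 with μ₁ + μ₂ + μ₃ = 1, and all reals s, t, r with μ₁s + μ₂t + μ₃r = 0, the 3D Bernoulli function satisfies the splitting identity μ₃·B₃^ε(s,t,r) + μ₁·B₃^ε(t,r,s) + μ₂·B₃^ε(r,s,t) = B₃^ε(t−s, r−s, −s). (Geometrically: for a point x in a facet F_j of a tetrahedron with barycentric coordinates μ on that facet, one has B₃^ε(σ_s,σ_t,σ_r)|f_{st}| + B₃^ε(σ_t,σ_r,σ_s)|f_{tr}| + B₃^ε(σ_r,σ_s,σ_t)|f_{rs}| = |F_j|·B₃^ε(σ_{st}, σ_{sr}, −σ_s), the identity used to prove the facet degrees of freedom of S²_{1⁻}(T).) -/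

import Mathlib

/-!
Write `u` for the affine function on the reference triangle (tetrahedron) with vertex values
`0, σ₁, σ₂ (, σ₃)`; then `B₃^ε` is `ε/3` times the ratio of the integrals of `exp (u / ε)` over the
triangle and over the tetrahedron. Such integrals are symmetric in the vertex values and get
multiplied by `exp (k / ε)` when every vertex value is shifted by `k`. Hence all four terms of the
identity have the same denominator, and the numerator on the right is `exp (-s / ε)` times the
triangle integral with vertex values `s, t, r`. The point with barycentric coordinates `μ` is where
`u` vanishes; cutting the triangle there into three subtriangles of relative areas `μ₃, μ₁, μ₂`
gives the identity of numerators. The cut is made by two cevians, each cut being a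
one-dimensional change of variables.
-/

open Real

/-- The 3D Bernoulli function. -/
noncomputable def B3 (ε σ₁ σ₂ σ₃ : ℝ) : ℝ :=
  ε * (2 * ∫ x₂ in (0:ℝ)..1, ∫ x₁ in (0:ℝ)..(1 - x₂),
        Real.exp ((σ₁ * x₁ + σ₂ * x₂) / ε)) /
    (6 * ∫ x₃ in (0:ℝ)..1, ∫ x₂ in (0:ℝ)..(1 - x₃), ∫ x₁ in (0:ℝ)..(1 - x₂ - x₃),
        Real.exp ((σ₁ * x₁ + σ₂ * x₂ + σ₃ * x₃) / ε))

open Set Function intervalIntegral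

def triangleRegion (A : ℝ) : Set (ℝ × ℝ) := {p | 0 < p.1 ∧ 0 < p.2 ∧ p.1 + p.2 ≤ A}

theorem measurableSet_triangleRegion (A : ℝ) : MeasurableSet (triangleRegion A) :=
  (measurableSet_lt measurable_const measurable_fst).inter
    ((measurableSet_lt measurable_const measurable_snd).inter
      (measurableSet_le (measurable_fst.add measurable_snd) measurable_const))

theorem triangleRegion_subset_Icc (A : ℝ) : triangleRegion A ⊆ Icc (0, 0) (A, A) :=
  fun _ ⟨hx, hy, hxy⟩ => ⟨⟨hx.le, hy.le⟩, by constructor <;> linarith⟩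

theorem integral_integral_triangle_eq_integral_indicator (f : ℝ → ℝ → ℝ) {A : ℝ} (hA : 0 ≤ A) :
    ∫ y in 0..A, ∫ x in 0..A - y, f x y
      = ∫ y, ∫ x, (triangleRegion A).indicator (uncurry f) (x, y) := by
  rw [integral_of_le hA, ← MeasureTheory.integral_indicator measurableSet_Ioc]
  congr with y
  by_cases hy : y ∈ Ioc 0 A
  · rw [indicator_of_mem hy, integral_of_le (by linarith [hy.2]),
      ← MeasureTheory.integral_indicator measurableSet_Ioc]
    congr with x
    simp only [indicator_apply, triangleRegion, mem_Ioc, mem_ofPred_eq, uncurry_apply_pair]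
    congr 1
    exact propext ⟨fun ⟨h₁, h₂⟩ => ⟨h₁, hy.1, by linarith⟩, fun ⟨h₁, _, h₃⟩ => ⟨h₁, by linarith⟩⟩
  · have : ∀ x, (triangleRegion A).indicator (uncurry f) (x, y) = 0 := fun x =>
      indicator_of_notMem (fun h => hy ⟨h.2.1, by linarith [h.1, h.2.2]⟩) _
    simp [indicator_of_notMem hy, this]

theorem integral_integral_triangle_swap {f : ℝ → ℝ → ℝ} (hf : Continuous (uncurry f)) {A : ℝ}
    (hA : 0 ≤ A) :
    ∫ y in 0..A, ∫ x in 0..A - y, f x y = ∫ x in 0..A, ∫ y in 0..A - x, f x y := by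
  have hint : MeasureTheory.Integrable ((triangleRegion A).indicator (uncurry f)) :=
    (MeasureTheory.integrable_indicator_iff (measurableSet_triangleRegion A)).2 <|
      (hf.continuousOn.integrableOn_compact isCompact_Icc).mono_set
        (triangleRegion_subset_Icc A)
  rw [integral_integral_triangle_eq_integral_indicator f hA,
    integral_integral_triangle_eq_integral_indicator (fun y x => f x y) hA,
    MeasureTheory.integral_integral_swap
      (f := fun y x => (triangleRegion A).indicator (uncurry f) (x, y)) hint.swap]
  congr with x
  congr with y
  simp only [indicator_apply, triangleRegion, mem_ofPred_eq, uncurry_apply_pair]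
  congr 1
  exact propext ⟨fun ⟨h₁, h₂, _⟩ => ⟨h₂, h₁, by linarith⟩, fun ⟨h₁, h₂, _⟩ => ⟨h₂, h₁, by linarith⟩⟩

theorem integral_zero_comp_sub_left (f : ℝ → ℝ) (L : ℝ) :
    ∫ x in 0..L, f (L - x) = ∫ x in 0..L, f x := by
  simp

/-- The integral over the reference triangle of `g ∘ u`, where `u` is the affine function taking
the values `a`, `b`, `c` at the vertices `0`, `e₁`, `e₂`. -/
noncomputable def triangleIntegral (g : ℝ → ℝ) (a b c : ℝ) : ℝ :=
  ∫ y in 0..1, ∫ x in 0..1 - y, g (a + (b - a) * x + (c - a) * y)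

noncomputable def tetrahedronIntegral (g : ℝ → ℝ) (a b c d : ℝ) : ℝ :=
  ∫ z in 0..1, ∫ y in 0..1 - z, ∫ x in 0..1 - y - z,
    g (a + (b - a) * x + (c - a) * y + (d - a) * z)

section

variable {g : ℝ → ℝ}

theorem triangleIntegral_swap_ab (a b c : ℝ) :
    triangleIntegral g a b c = triangleIntegral g b a c := by
  unfold triangleIntegral
  congr with y
  rw [← integral_zero_comp_sub_left]
  congr with x
  ring_nf

theorem triangleIntegral_swap_bc (hg : Continuous g) (a b c : ℝ) :
    triangleIntegral g a b c = triangleIntegral g a c b := by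
  unfold triangleIntegral
  rw [integral_integral_triangle_swap (by fun_prop) zero_le_one]
  congr with y
  congr with x
  ring_nf

theorem triangleIntegral_rotate (hg : Continuous g) (a b c : ℝ) :
    triangleIntegral g a b c = triangleIntegral g b c a := by
  rw [triangleIntegral_swap_ab, triangleIntegral_swap_bc hg]

theorem triangleIntegral_add_const {k m : ℝ} (hgk : ∀ u, g (u + k) = m * g u) (a b c : ℝ) :
    triangleIntegral g (a + k) (b + k) (c + k) = m * triangleIntegral g a b c := by
  unfold triangleIntegral
  rw [← integral_const_mul]
  congr with y
  rw [← integral_const_mul]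
  congr with x
  rw [← hgk]
  ring_nf

/-- Cutting the triangle along the segment from its third vertex to the point dividing the first
edge in the ratio `l : 1 - l`. -/
theorem triangleIntegral_cevian (hg : Continuous g) (l a b c : ℝ) :
    triangleIntegral g a b c
      = l * triangleIntegral g a (a + l * (b - a)) c
        + (1 - l) * triangleIntegral g (a + l * (b - a)) b c := by
  have hcont : ∀ p q r : ℝ, Continuous fun y => ∫ x in 0..1 - y, g (p + q * x + r * y) :=
    fun p q r => continuous_parametric_intervalIntegral_of_continuous (by fun_prop) (by fun_prop)
  unfold triangleIntegral
  rw [← integral_const_mul, ← integral_const_mul, ← integral_add]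
  · congr with y
    have hE : Continuous fun x => g (a + (b - a) * x + (c - a) * y) := by fun_prop
    have h₁ := smul_integral_comp_mul_left (fun x => g (a + (b - a) * x + (c - a) * y)) l
      (a := 0) (b := 1 - y)
    have h₂ := smul_integral_comp_mul_add (fun x => g (a + (b - a) * x + (c - a) * y)) (1 - l)
      (l * (1 - y)) (a := 0) (b := 1 - y)
    rw [mul_zero, smul_eq_mul] at h₁
    rw [mul_zero, zero_add, show (1 - l) * (1 - y) + l * (1 - y) = 1 - y by ring,
      smul_eq_mul] at h₂
    rw [← integral_add_adjacent_intervals (hE.intervalIntegrable 0 (l * (1 - y)))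
      (hE.intervalIntegrable _ (1 - y)), ← h₁, ← h₂]
    congr 2 <;> congr with x <;> congr 1 <;> ring
  · exact (continuous_const.mul (hcont _ _ _)).intervalIntegrable _ _
  · exact (continuous_const.mul (hcont _ _ _)).intervalIntegrable _ _

theorem triangleIntegral_split_of_add_ne_zero (hg : Continuous g) {μ₁ μ₂ μ₃ a b c p : ℝ}
    (hμ : μ₁ + μ₂ + μ₃ = 1) (h₁₂ : μ₁ + μ₂ ≠ 0) (hp : μ₁ * a + μ₂ * b + μ₃ * c = p) :
    triangleIntegral g a b c
      = μ₃ * triangleIntegral g a b p + μ₁ * triangleIntegral g b c p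
        + μ₂ * triangleIntegral g c a p := by
  -- The cevian from the vertex with value `c` through the point with barycentric coordinates `μ`
  -- meets the opposite edge where `u = q`, and `u = p` at that point.
  set l := μ₂ / (μ₁ + μ₂)
  set q := a + l * (b - a)
  have hl₂ : l * (1 - μ₃) = μ₂ := by
    rw [show 1 - μ₃ = μ₁ + μ₂ by linarith]
    exact div_mul_cancel₀ _ h₁₂
  have hl₁ : (1 - l) * (1 - μ₃) = μ₁ := by linear_combination -hμ - hl₂
  have hqp : q + μ₃ * (c - q) = p := by linear_combination (b - a) * hl₂ + hp - a * hμ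
  have e₁ := triangleIntegral_cevian hg l a b c
  have e₂ := triangleIntegral_cevian hg μ₃ q c a
  have e₃ := triangleIntegral_cevian hg μ₃ q c b
  have e₄ := triangleIntegral_cevian hg l a b p
  rw [hqp] at e₂ e₃
  rw [triangleIntegral_rotate hg a q c, triangleIntegral_swap_bc hg q b c] at e₁
  rw [← triangleIntegral_rotate hg a q p, triangleIntegral_rotate hg p c a] at e₂
  rw [← triangleIntegral_swap_bc hg q b p, triangleIntegral_swap_ab p c b,
    ← triangleIntegral_rotate hg b c p] at e₃
  linear_combination e₁ + l * e₂ + (1 - l) * e₃ - μ₃ * e₄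
    + triangleIntegral g c a p * hl₂ + triangleIntegral g b c p * hl₁

theorem triangleIntegral_split (hg : Continuous g) {μ₁ μ₂ μ₃ a b c p : ℝ}
    (hμ : μ₁ + μ₂ + μ₃ = 1) (hp : μ₁ * a + μ₂ * b + μ₃ * c = p) :
    triangleIntegral g a b c
      = μ₃ * triangleIntegral g a b p + μ₁ * triangleIntegral g b c p
        + μ₂ * triangleIntegral g c a p := by
  obtain h | h | h : μ₁ + μ₂ ≠ 0 ∨ μ₂ + μ₃ ≠ 0 ∨ μ₃ + μ₁ ≠ 0 := by
    by_contra! h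
    linarith [h.1, h.2.1, h.2.2]
  · exact triangleIntegral_split_of_add_ne_zero hg hμ h hp
  · have := triangleIntegral_split_of_add_ne_zero hg (by linarith) h
      (by linarith : μ₂ * b + μ₃ * c + μ₁ * a = p)
    rw [← triangleIntegral_rotate hg] at this
    linarith
  · have := triangleIntegral_split_of_add_ne_zero hg (by linarith) h
      (by linarith : μ₃ * c + μ₁ * a + μ₂ * b = p)
    rw [← triangleIntegral_rotate hg, ← triangleIntegral_rotate hg] at this
    linarith

theorem tetrahedronIntegral_swap_ab (a b c d : ℝ) :
    tetrahedronIntegral g a b c d = tetrahedronIntegral g b a c d := by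
  unfold tetrahedronIntegral
  congr with z
  congr with y
  rw [← integral_zero_comp_sub_left]
  congr with x
  ring_nf

theorem tetrahedronIntegral_swap_bc (hg : Continuous g) (a b c d : ℝ) :
    tetrahedronIntegral g a b c d = tetrahedronIntegral g a c b d := by
  unfold tetrahedronIntegral
  refine integral_congr fun z hz => ?_
  rw [uIcc_of_le zero_le_one] at hz
  simp only [sub_right_comm (1 : ℝ) _ z]
  rw [integral_integral_triangle_swap (by fun_prop) (sub_nonneg.2 hz.2)]
  congr with y
  congr with x
  ring_nf

theorem tetrahedronIntegral_swap_cd (hg : Continuous g) (a b c d : ℝ) :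
    tetrahedronIntegral g a b c d = tetrahedronIntegral g a b d c := by
  have hF : Continuous (uncurry fun y z =>
      ∫ x in 0..1 - y - z, g (a + (b - a) * x + (c - a) * y + (d - a) * z)) :=
    continuous_parametric_intervalIntegral_of_continuous (by fun_prop) (by fun_prop)
  unfold tetrahedronIntegral
  rw [integral_integral_triangle_swap hF zero_le_one]
  congr with y
  congr with z
  rw [sub_right_comm]
  congr with x
  ring_nf

theorem tetrahedronIntegral_rotate_bcd (hg : Continuous g) (a b c d : ℝ) :
    tetrahedronIntegral g a b c d = tetrahedronIntegral g a d b c := by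
  rw [tetrahedronIntegral_swap_cd hg, tetrahedronIntegral_swap_bc hg]

theorem tetrahedronIntegral_rotate (hg : Continuous g) (a b c d : ℝ) :
    tetrahedronIntegral g a b c d = tetrahedronIntegral g d a b c := by
  rw [tetrahedronIntegral_rotate_bcd hg, tetrahedronIntegral_swap_ab]

theorem tetrahedronIntegral_add_const {k m : ℝ} (hgk : ∀ u, g (u + k) = m * g u) (a b c d : ℝ) :
    tetrahedronIntegral g (a + k) (b + k) (c + k) (d + k) = m * tetrahedronIntegral g a b c d := by
  unfold tetrahedronIntegral
  rw [← integral_const_mul]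
  congr with z
  rw [← integral_const_mul]
  congr with y
  rw [← integral_const_mul]
  congr with x
  rw [← hgk]
  ring_nf

end

theorem B3_eq_triangleIntegral_div (ε σ₁ σ₂ σ₃ : ℝ) :
    B3 ε σ₁ σ₂ σ₃
      = ε * (2 * triangleIntegral (fun u => Real.exp (u / ε)) 0 σ₁ σ₂)
        / (6 * tetrahedronIntegral (fun u => Real.exp (u / ε)) 0 σ₁ σ₂ σ₃) := by
  simp only [B3, triangleIntegral, tetrahedronIntegral, sub_zero, zero_add]

theorem B3_sub_sub_neg_eq (ε s t r : ℝ) :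
    B3 ε (t - s) (r - s) (-s)
      = ε * (2 * triangleIntegral (fun u => Real.exp (u / ε)) s t r)
        / (6 * tetrahedronIntegral (fun u => Real.exp (u / ε)) 0 s t r) := by
  have hexp (u : ℝ) : Real.exp ((u + -s) / ε) = Real.exp (-s / ε) * Real.exp (u / ε) := by
    rw [← Real.exp_add]
    ring_nf
  have hT := triangleIntegral_add_const (g := fun u => Real.exp (u / ε)) hexp s t r
  have hD := tetrahedronIntegral_add_const (g := fun u => Real.exp (u / ε)) hexp s t r 0
  simp only [add_neg_cancel, ← sub_eq_add_neg, zero_sub] at hT hD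
  rw [B3_eq_triangleIntegral_div, hT, hD, tetrahedronIntegral_rotate (by fun_prop) s t r 0,
    mul_left_comm 2, mul_left_comm ε, mul_left_comm 6, mul_div_mul_left _ _ (Real.exp_ne_zero _)]

theorem B3_splitting_general (ε : ℝ) (μ₁ μ₂ μ₃ : ℝ) (hsum : μ₁ + μ₂ + μ₃ = 1)
    (s t r : ℝ) (hzero : μ₁ * s + μ₂ * t + μ₃ * r = 0) :
    μ₃ * B3 ε s t r + μ₁ * B3 ε t r s + μ₂ * B3 ε r s t
      = B3 ε (t - s) (r - s) (-s) := by
  have hg : Continuous fun u => Real.exp (u / ε) := by fun_prop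
  rw [B3_eq_triangleIntegral_div, B3_eq_triangleIntegral_div, B3_eq_triangleIntegral_div,
    B3_sub_sub_neg_eq, triangleIntegral_split hg hsum hzero,
    tetrahedronIntegral_rotate_bcd hg 0 r s t, tetrahedronIntegral_rotate_bcd hg 0 t r s,
    triangleIntegral_rotate hg 0 s t, triangleIntegral_rotate hg 0 t r,
    triangleIntegral_rotate hg 0 r s]
  ring

/-- **Splitting identity of the 3D Bernoulli function.**
For `ε > 0`, `μ₁, μ₂, μ₃ ≥ 0` with `μ₁ + μ₂ + μ₃ = 1` and `s, t, r` with
`μ₁s + μ₂t + μ₃r = 0`: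
`μ₃·B₃^ε(s,t,r) + μ₁·B₃^ε(t,r,s) + μ₂·B₃^ε(r,s,t) = B₃^ε(t−s, r−s, −s)` —
the identity used to prove the facet degrees of freedom of `S²_{1⁻}(T)`. -/
theorem B3_splitting (ε : ℝ) (hε : 0 < ε) (μ₁ μ₂ μ₃ : ℝ)
    (h1 : 0 ≤ μ₁) (h2 : 0 ≤ μ₂) (h3 : 0 ≤ μ₃) (hsum : μ₁ + μ₂ + μ₃ = 1)
    (s t r : ℝ) (hzero : μ₁ * s + μ₂ * t + μ₃ * r = 0) :
    μ₃ * B3 ε s t r + μ₁ * B3 ε t r s + μ₂ * B3 ε r s t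
      = B3 ε (t - s) (r - s) (-s) :=
  B3_splitting_general ε μ₁ μ₂ μ₃ hsum s t r hzero
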